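/- Let k be a commutative ring and A an associative unital k-algebra which is finitely generated and projective as a k-module. Then A is separable (i.e. there exists e = Σ e¹⊗e² ∈ A⊗A with (a⊗1)·e = e·(1⊗a) for all a ∈ A and Σ e¹e² = 1_A) if and only if there exists R ∈ End_k(A)⊗End_k(A) such that (i) R is a solution of the FS-equation R¹²R²³ = R²³R¹³ = R¹³R¹² in End_k(A)⊗End_k(A)⊗End_k(A), (ii) R satisfies the normalizing separability condition Σ R¹∘R² = I_A (the image of R under the multiplication map End_k(A)⊗End_k(A) → End_k(A) is the identity), and (iii) there is a k-algebra isomorphism A ≅ A(R), where A(R) := {f ∈ End_k(A) | (f⊗1)·R = R·(1⊗f) in End_k(A)⊗End_k(A)}. -/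

import Mathlib

open TensorProduct

variable {k B : Type*} [CommRing k] [Ring B] [Algebra k B]

/-- The map `B ⊗ B → B ⊗ B ⊗ B`, `x ⊗ y ↦ x ⊗ y ⊗ 1`. -/
noncomputable def leg12 : B ⊗[k] B →ₐ[k] B ⊗[k] (B ⊗[k] B) :=
  Algebra.TensorProduct.map (AlgHom.id k B) Algebra.TensorProduct.includeLeft

/-- The map `B ⊗ B → B ⊗ B ⊗ B`, `x ⊗ y ↦ x ⊗ 1 ⊗ y`. -/
noncomputable def leg13 : B ⊗[k] B →ₐ[k] B ⊗[k] (B ⊗[k] B) :=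
  Algebra.TensorProduct.map (AlgHom.id k B) Algebra.TensorProduct.includeRight

/-- The map `B ⊗ B → B ⊗ B ⊗ B`, `x ⊗ y ↦ 1 ⊗ x ⊗ y`. -/
noncomputable def leg23 : B ⊗[k] B →ₐ[k] B ⊗[k] (B ⊗[k] B) :=
  Algebra.TensorProduct.includeRight

/-!
Write `Δ_R f = (f ⊗ 1) R - R (1 ⊗ f)`, so that `A(R) = ker Δ_R`. Up to associativity, the two
FS-equations say exactly that `R` is killed by `id ⊗ Δ_R` and by `Δ_R ⊗ id`.

(⇒) A separability idempotent `e` has `Δ_e = 0`, hence solves the FS-equation, and so does its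
image `R` under `λ ⊗ λ`, where `λ : A → End_k(A)` is the left regular representation. Then
`A(R) = λ(A)`: applying `g ⊗ h ↦ g (h 1 * x)` to `(f ⊗ 1) R = R (1 ⊗ f)` gives `f x = f 1 * x`.

(⇐) `End_k(A)` and `A(R) ≅ A` are flat, so tensoring `0 → A(R) → End_k(A) → End_k(A) ⊗ End_k(A)`
with `End_k(A)`, with `A(R)` or with `End_k(A) ⊗ End_k(A)` keeps it exact. The equation for `Δ_R ⊗ id` puts `R` in `A(R) ⊗ End_k(A)`, the
one for `id ⊗ Δ_R` then puts it in `A(R) ⊗ A(R)`, and since `A(R) ⊗ A(R) → End_k(A) ⊗ End_k(A)`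
is injective the preimage is a separability idempotent of `A(R)`.
-/

def IsSeparabilityIdempotent (e : B ⊗[k] B) : Prop :=
  (∀ b : B, (b ⊗ₜ[k] (1 : B)) * e = e * ((1 : B) ⊗ₜ[k] b)) ∧ LinearMap.mul' k B e = 1

def IsFSSolution (R : B ⊗[k] B) : Prop :=
  leg12 R * leg23 R = leg23 R * leg13 R ∧ leg23 R * leg13 R = leg13 R * leg12 R

noncomputable def tmulOneMul (y : B ⊗[k] B) : B →ₗ[k] B ⊗[k] B :=
  LinearMap.mulRight k y ∘ₗ (TensorProduct.mk k B B).flip 1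

noncomputable def mulOneTmul (y : B ⊗[k] B) : B →ₗ[k] B ⊗[k] B :=
  LinearMap.mulLeft k y ∘ₗ TensorProduct.mk k B B 1

@[simp] lemma tmulOneMul_apply (y : B ⊗[k] B) (b : B) : tmulOneMul y b = (b ⊗ₜ 1) * y := rfl

@[simp] lemma mulOneTmul_apply (y : B ⊗[k] B) (b : B) : mulOneTmul y b = y * (1 ⊗ₜ b) := rfl

@[simp] lemma leg12_tmul (a b : B) :
    (leg12 (a ⊗ₜ[k] b) : B ⊗[k] (B ⊗[k] B)) = a ⊗ₜ (b ⊗ₜ 1) := by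
  simp [leg12]

@[simp] lemma leg13_tmul (a b : B) :
    (leg13 (a ⊗ₜ[k] b) : B ⊗[k] (B ⊗[k] B)) = a ⊗ₜ (1 ⊗ₜ b) := by
  simp [leg13]

@[simp] lemma leg23_apply (x : B ⊗[k] B) : (leg23 x : B ⊗[k] (B ⊗[k] B)) = 1 ⊗ₜ x := rfl

lemma leg12_mul_leg23_eq_lTensor (x y : B ⊗[k] B) :
    leg12 x * leg23 y = (tmulOneMul y).lTensor B x := by
  induction x with
  | zero => simp
  | tmul a b => simp [Algebra.TensorProduct.tmul_mul_tmul]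
  | add u v hu hv => rw [map_add, add_mul, hu, hv, map_add]

lemma leg23_mul_leg13_eq_lTensor (x y : B ⊗[k] B) :
    leg23 y * leg13 x = (mulOneTmul y).lTensor B x := by
  induction x with
  | zero => simp
  | tmul a b => simp [Algebra.TensorProduct.tmul_mul_tmul]
  | add u v hu hv => rw [map_add, mul_add, hu, hv, map_add]

lemma leg13_mul_leg12_eq_assoc_rTensor (x y : B ⊗[k] B) :
    leg13 x * leg12 y = TensorProduct.assoc k B B B ((tmulOneMul y).rTensor B x) := by
  induction x with
  | zero => simp
  | tmul a b =>
    induction y with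
    | zero => simp
    | tmul c d => simp [Algebra.TensorProduct.tmul_mul_tmul]
    | add u v hu hv =>
      rw [map_add, mul_add, hu, hv]
      simp [mul_add, add_tmul]
  | add u v hu hv => rw [map_add, add_mul, hu, hv, map_add, map_add]

lemma leg12_mul_leg23_eq_assoc_rTensor (x y : B ⊗[k] B) :
    leg12 y * leg23 x = TensorProduct.assoc k B B B ((mulOneTmul y).rTensor B x) := by
  induction x with
  | zero => simp
  | tmul a b =>
    induction y with
    | zero => simp
    | tmul c d => simp [Algebra.TensorProduct.tmul_mul_tmul]
    | add u v hu hv =>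
      rw [map_add, add_mul, hu, hv]
      simp [add_mul, add_tmul]
  | add u v hu hv => rw [map_add, mul_add, hu, hv, map_add, map_add]

lemma isFSSolution_iff (R : B ⊗[k] B) :
    IsFSSolution R ↔ (tmulOneMul R - mulOneTmul R).lTensor B R = 0 ∧
      (tmulOneMul R - mulOneTmul R).rTensor B R = 0 := by
  have hl : leg12 R * leg23 R = leg23 R * leg13 R ↔
      (tmulOneMul R - mulOneTmul R).lTensor B R = 0 := by
    rw [leg12_mul_leg23_eq_lTensor, leg23_mul_leg13_eq_lTensor, LinearMap.lTensor_sub,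
      LinearMap.sub_apply, sub_eq_zero]
  have hr : leg12 R * leg23 R = leg13 R * leg12 R ↔
      (tmulOneMul R - mulOneTmul R).rTensor B R = 0 := by
    rw [leg12_mul_leg23_eq_assoc_rTensor, leg13_mul_leg12_eq_assoc_rTensor,
      (TensorProduct.assoc k B B B).injective.eq_iff, LinearMap.rTensor_sub,
      LinearMap.sub_apply, sub_eq_zero, eq_comm]
  rw [← hl, ← hr]
  constructor
  · rintro ⟨h1, h2⟩
    exact ⟨h1, h1.trans h2⟩
  · rintro ⟨h1, h2⟩
    exact ⟨h1, h1.symm.trans h2⟩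

lemma isFSSolution_of_forall_tmul_one_mul_eq {e : B ⊗[k] B}
    (he : ∀ b : B, (b ⊗ₜ[k] (1 : B)) * e = e * ((1 : B) ⊗ₜ[k] b)) : IsFSSolution e := by
  have : tmulOneMul e - mulOneTmul e = 0 := sub_eq_zero.mpr (LinearMap.ext he)
  simp [isFSSolution_iff, this]

section Map

variable {C : Type*} [Ring C] [Algebra k C] (f : B →ₐ[k] C)

lemma leg12_map (u : B ⊗[k] B) :
    leg12 (Algebra.TensorProduct.map f f u)
      = Algebra.TensorProduct.map f (Algebra.TensorProduct.map f f) (leg12 u) := by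
  induction u with
  | zero => simp
  | tmul a b => simp
  | add u v hu hv => simp only [map_add, hu, hv]

lemma leg13_map (u : B ⊗[k] B) :
    leg13 (Algebra.TensorProduct.map f f u)
      = Algebra.TensorProduct.map f (Algebra.TensorProduct.map f f) (leg13 u) := by
  induction u with
  | zero => simp
  | tmul a b => simp
  | add u v hu hv => simp only [map_add, hu, hv]

lemma leg23_map (u : B ⊗[k] B) :
    leg23 (Algebra.TensorProduct.map f f u)
      = Algebra.TensorProduct.map f (Algebra.TensorProduct.map f f) (leg23 u) := by
  simp

lemma IsFSSolution.map {R : B ⊗[k] B} (hR : IsFSSolution R) :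
    IsFSSolution (Algebra.TensorProduct.map f f R) := by
  simp only [IsFSSolution, leg12_map, leg13_map, leg23_map, ← map_mul, hR.1, hR.2, and_self]

lemma mul'_map (u : B ⊗[k] B) :
    LinearMap.mul' k C (Algebra.TensorProduct.map f f u) = f (LinearMap.mul' k B u) := by
  induction u with
  | zero => simp
  | tmul a b => simp
  | add u v hu hv => simp only [map_add, hu, hv]

lemma IsSeparabilityIdempotent.map (hf : Function.Surjective f) {e : B ⊗[k] B}
    (he : IsSeparabilityIdempotent e) :
    IsSeparabilityIdempotent (Algebra.TensorProduct.map f f e) := by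
  refine ⟨fun c => ?_, by rw [mul'_map, he.2, map_one]⟩
  obtain ⟨b, rfl⟩ := hf c
  have h := congrArg (Algebra.TensorProduct.map f f) (he.1 b)
  rwa [map_mul, map_mul, Algebra.TensorProduct.map_tmul, Algebra.TensorProduct.map_tmul,
    map_one] at h

end Map

section Flat

variable {M N S : Type*} [AddCommGroup M] [Module k M] [AddCommGroup N] [Module k N]
  [AddCommGroup S] [Module k S] [Module.Flat k M] [Module.Flat k N] [Module.Flat k S]

theorem exists_map_eq_of_lTensor_eq_zero_of_rTensor_eq_zero {ι : S →ₗ[k] M} {g : M →ₗ[k] N}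
    (hι : Function.Injective ι) (hexact : Function.Exact ι g) {z : M ⊗[k] M}
    (hl : g.lTensor M z = 0) (hr : g.rTensor M z = 0) :
    ∃ w : S ⊗[k] S, TensorProduct.map ι ι w = z := by
  obtain ⟨z', rfl⟩ := (Module.Flat.rTensor_exact M hexact z).mp hr
  have hz' : g.lTensor S z' = 0 := by
    apply Module.Flat.rTensor_preserves_injective_linearMap (M := N) ι hι
    rw [map_zero, ← LinearMap.comp_apply, LinearMap.rTensor_comp_lTensor,
      ← LinearMap.lTensor_comp_rTensor, LinearMap.comp_apply, hl]
  obtain ⟨w, rfl⟩ := (Module.Flat.lTensor_exact S hexact z').mp hz'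
  exact ⟨w, by rw [← LinearMap.rTensor_comp_lTensor, LinearMap.comp_apply]⟩

end Flat

theorem IsFSSolution.exists_isSeparabilityIdempotent [Module.Flat k B] {R : B ⊗[k] B}
    (hR : IsFSSolution R) (hR1 : LinearMap.mul' k B R = 1) (S : Subalgebra k B)
    [Module.Flat k S] (hS : ∀ f, f ∈ S ↔ (f ⊗ₜ[k] (1 : B)) * R = R * ((1 : B) ⊗ₜ[k] f)) :
    ∃ ε : S ⊗[k] S, IsSeparabilityIdempotent ε := by
  have hexact : Function.Exact S.val.toLinearMap (tmulOneMul R - mulOneTmul R) := fun f => by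
    simp [sub_eq_zero, hS f]
  obtain ⟨ε, hε⟩ := exists_map_eq_of_lTensor_eq_zero_of_rTensor_eq_zero
    Subtype.val_injective hexact ((isFSSolution_iff R).mp hR).1 ((isFSSolution_iff R).mp hR).2
  replace hε : Algebra.TensorProduct.map S.val S.val ε = R := hε
  have hinj : Function.Injective (Algebra.TensorProduct.map S.val S.val) :=
    TensorProduct.map_injective_of_flat_flat S.val.toLinearMap S.val.toLinearMap
      Subtype.val_injective Subtype.val_injective
  refine ⟨ε, fun s => hinj ?_, Subtype.val_injective ?_⟩
  · simpa [hε] using (hS s).mp s.2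
  · change S.val (LinearMap.mul' k S ε) = S.val 1
    rw [map_one, ← mul'_map, hε, hR1]

section Lmul

local notation "L" => Algebra.lmul k B

lemma eq_lmul_apply_one_of_tmul_one_mul_eq {e : B ⊗[k] B} (he : LinearMap.mul' k B e = 1)
    {f : Module.End k B}
    (hf : (f ⊗ₜ[k] (1 : Module.End k B)) * Algebra.TensorProduct.map L L e
      = Algebra.TensorProduct.map L L e * ((1 : Module.End k B) ⊗ₜ[k] f)) :
    f = L (f 1) := by
  ext x
  let Ψ : Module.End k B ⊗[k] Module.End k B →ₗ[k] B :=
    TensorProduct.lift (LinearMap.applyₗ ∘ₗ LinearMap.mulRight k x ∘ₗ LinearMap.applyₗ 1).flip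
  have hleft : ∀ u : B ⊗[k] B, Ψ ((f ⊗ₜ[k] 1) * Algebra.TensorProduct.map L L u)
      = f (LinearMap.mul' k B u * x) := by
    intro u
    induction u with
    | zero => simp
    | tmul a b => simp [Ψ, Algebra.TensorProduct.tmul_mul_tmul, mul_assoc]
    | add u v hu hv => simp only [map_add, mul_add, hu, hv, add_mul]
  have hright : ∀ u : B ⊗[k] B, Ψ (Algebra.TensorProduct.map L L u * (1 ⊗ₜ[k] f))
      = LinearMap.mul' k B u * (f 1 * x) := by
    intro u
    induction u with
    | zero => simp
    | tmul a b => simp [Ψ, Algebra.TensorProduct.tmul_mul_tmul, mul_assoc]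
    | add u v hu hv => simp only [map_add, add_mul, hu, hv]
  simpa [he] using (hleft e).symm.trans ((congrArg Ψ hf).trans (hright e))

lemma coe_range_lmul_eq {e : B ⊗[k] B} (he : IsSeparabilityIdempotent e) :
    ((L).range : Set (Module.End k B)) =
      {f | (f ⊗ₜ[k] (1 : Module.End k B)) * Algebra.TensorProduct.map L L e
        = Algebra.TensorProduct.map L L e * ((1 : Module.End k B) ⊗ₜ[k] f)} := by
  ext f
  constructor
  · rintro ⟨b, rfl⟩
    have h := congrArg (Algebra.TensorProduct.map L L) (he.1 b)
    rwa [map_mul, map_mul, Algebra.TensorProduct.map_tmul, Algebra.TensorProduct.map_tmul,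
      map_one] at h
  · intro hf
    exact ⟨f 1, (eq_lmul_apply_one_of_tmul_one_mul_eq he.2 hf).symm⟩

end Lmul

/-- A finitely generated projective `k`-algebra `A` is separable iff it is
isomorphic to `A(R)` for a solution `R ∈ End_k(A) ⊗ End_k(A)` of the
FS-equation satisfying the normalizing separability condition. -/
theorem separable_iff_isomorphic_to_AR
    (k A : Type*) [CommRing k] [Ring A] [Algebra k A]
    [Module.Finite k A] [Module.Projective k A] :
    (∃ e : A ⊗[k] A,
      (∀ a : A, (a ⊗ₜ[k] (1 : A)) * e = e * ((1 : A) ⊗ₜ[k] a)) ∧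
      LinearMap.mul' k A e = 1) ↔
    (∃ R : Module.End k A ⊗[k] Module.End k A,
      (leg12 R * leg23 R = leg23 R * leg13 R ∧
        leg23 R * leg13 R = leg13 R * leg12 R) ∧
      LinearMap.mul' k (Module.End k A) R = 1 ∧
      ∃ S : Subalgebra k (Module.End k A),
        (S : Set (Module.End k A)) =
          {f : Module.End k A |
            (f ⊗ₜ[k] (1 : Module.End k A)) * R = R * ((1 : Module.End k A) ⊗ₜ[k] f)} ∧
        Nonempty (A ≃ₐ[k] S)) := by
  constructor
  · rintro ⟨e, he⟩
    let L := Algebra.lmul k A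
    refine ⟨Algebra.TensorProduct.map L L e, (isFSSolution_of_forall_tmul_one_mul_eq he.1).map L,
      by rw [mul'_map, he.2, map_one], L.range, coe_range_lmul_eq he,
      ⟨AlgEquiv.ofInjective L Algebra.lmul_injective⟩⟩
  · rintro ⟨R, hR, hR1, S, hS, ⟨ψ⟩⟩
    have : Module.Projective k (Module.End k A) := .of_equiv (dualTensorHomEquiv k A A)
    have : Module.Flat k S := .of_linearEquiv ψ.symm.toLinearEquiv
    obtain ⟨ε, hε⟩ := IsFSSolution.exists_isSeparabilityIdempotent hR hR1 S (Set.ext_iff.mp hS)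
    exact ⟨_, hε.map ψ.symm.toAlgHom ψ.symm.surjective⟩
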